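/- For any Banach spaces X and Y, the numerical index of the space L_{w*}(X*,Y) of weak*-to-weak continuous bounded operators from X* to Y satisfies n(L_{w*}(X*,Y)) ≤ min{ n(X), n(Y) }. -/

import Mathlib

open Metric Set

/-- The numerical radius of a bounded linear operator `T` on a normed space `X` over `𝕜`:
`v(T) = sup { ‖x*(Tx)‖ : x ∈ S_X, x* ∈ S_{X*}, x*(x) = 1 }`. -/
noncomputable def numRadius (𝕜 : Type*) [RCLike 𝕜] {X : Type*} [NormedAddCommGroup X]
    [NormedSpace 𝕜 X] (T : X →L[𝕜] X) : ℝ :=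
  sSup {r : ℝ | ∃ (x : X) (f : X →L[𝕜] 𝕜), ‖x‖ = 1 ∧ ‖f‖ = 1 ∧ f x = 1 ∧ r = ‖f (T x)‖}

/-- The numerical index of a normed space: `n(X) = inf { v(T) : T ∈ L(X), ‖T‖ = 1 }`. -/
noncomputable def numIndex (𝕜 : Type*) [RCLike 𝕜] (X : Type*) [NormedAddCommGroup X]
    [NormedSpace 𝕜 X] : ℝ :=
  sInf {r : ℝ | ∃ T : X →L[𝕜] X, ‖T‖ = 1 ∧ r = numRadius 𝕜 T}

/-- `v_δ(T)` computed with points taken in `A ⊆ B_X` and functionals in `B ⊆ B_{X*}`. -/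
noncomputable def numRadiusDeltaOn (𝕜 : Type*) [RCLike 𝕜] {X : Type*} [NormedAddCommGroup X]
    [NormedSpace 𝕜 X] (T : X →L[𝕜] X) (A : Set X) (B : Set (X →L[𝕜] 𝕜)) (δ : ℝ) : ℝ :=
  sSup {r : ℝ | ∃ x ∈ A, ∃ f ∈ B, 1 - δ < RCLike.re (f x) ∧ r = ‖f (T x)‖}

/-- `Z` (together with the bounded bilinear map `t`) is the projective tensor product
`X ⊗̂_π Y`: it is complete, elementary tensors have norm `‖x‖‖y‖`, and the closed unit
ball of `Z` is the closed convex hull of `B_X ⊗ B_Y`. -/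
structure IsProjectiveTensorProduct (𝕜 : Type*) [RCLike 𝕜] {X Y Z : Type*}
    [NormedAddCommGroup X] [NormedSpace 𝕜 X] [NormedAddCommGroup Y] [NormedSpace 𝕜 Y]
    [NormedAddCommGroup Z] [NormedSpace 𝕜 Z] [NormedSpace ℝ Z] [IsScalarTower ℝ 𝕜 Z]
    (t : X →L[𝕜] Y →L[𝕜] Z) : Prop where
  complete : CompleteSpace Z
  norm_tmul : ∀ x y, ‖t x y‖ = ‖x‖ * ‖y‖
  ball_eq : closedBall (0 : Z) 1 = closure (convexHull ℝ
      {z : Z | ∃ x ∈ closedBall (0 : X) 1, ∃ y ∈ closedBall (0 : Y) 1, z = t x y})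

/-- `Z` (together with the bounded bilinear map `t`) is the injective tensor product
`X ⊗̂_ε Y`: it is complete, the span of elementary tensors is dense, and on that span
the norm is the injective tensor norm. -/
structure IsInjectiveTensorProduct (𝕜 : Type*) [RCLike 𝕜] {X Y Z : Type*}
    [NormedAddCommGroup X] [NormedSpace 𝕜 X] [NormedAddCommGroup Y] [NormedSpace 𝕜 Y]
    [NormedAddCommGroup Z] [NormedSpace 𝕜 Z] (t : X →L[𝕜] Y →L[𝕜] Z) : Prop where
  complete : CompleteSpace Z
  dense_span : Dense (Submodule.span 𝕜 {z : Z | ∃ x y, z = t x y} : Set Z)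
  norm_sum : ∀ (n : ℕ) (x : Fin n → X) (y : Fin n → Y),
    ‖∑ i, t (x i) (y i)‖ = sSup {r : ℝ | ∃ (f : X →L[𝕜] 𝕜) (g : Y →L[𝕜] 𝕜),
      ‖f‖ ≤ 1 ∧ ‖g‖ ≤ 1 ∧ r = ‖∑ i, f (x i) * g (y i)‖}

/-- A slice of a bounded set `A`: `{a ∈ A : Re f(a) > sup Re f(A) - δ}`. -/
def sliceOf (𝕜 : Type*) [RCLike 𝕜] {X : Type*} [NormedAddCommGroup X] [NormedSpace 𝕜 X]
    (A : Set X) (f : X →L[𝕜] 𝕜) (δ : ℝ) : Set X :=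
  {a ∈ A | sSup {r : ℝ | ∃ b ∈ A, r = RCLike.re (f b)} - δ < RCLike.re (f a)}

/-- A set `A` is slicely countably determined (SCD) if there is a countable determining
family of slices of `A`: any `B ⊆ A` meeting every slice of the family has
closed convex hull containing `A`. -/
def IsSCD (𝕜 : Type*) [RCLike 𝕜] {X : Type*} [NormedAddCommGroup X] [NormedSpace 𝕜 X]
    [NormedSpace ℝ X] [IsScalarTower ℝ 𝕜 X] (A : Set X) : Prop :=
  ∃ V : ℕ → Set X, (∀ n, ∃ (f : X →L[𝕜] 𝕜) (δ : ℝ), 0 < δ ∧ V n = sliceOf 𝕜 A f δ) ∧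
    ∀ B ⊆ A, (∀ n, (B ∩ V n).Nonempty) → A ⊆ closure (convexHull ℝ B)

/-- The Daugavet property: `‖Id + T‖ = 1 + ‖T‖` for every rank-one operator `T`. -/
def DaugavetProperty (𝕜 : Type*) [RCLike 𝕜] (X : Type*) [NormedAddCommGroup X]
    [NormedSpace 𝕜 X] : Prop :=
  ∀ T : X →L[𝕜] X, (∃ (f : X →L[𝕜] 𝕜) (x₀ : X), ∀ x, T x = f x • x₀) →
    ‖ContinuousLinearMap.id 𝕜 X + T‖ = 1 + ‖T‖

/-! A state of `L(W)`, i.e. a functional `Λ` with `‖Λ‖ ≤ 1 = Λ 1`, satisfies `‖Λ S‖ ≤ v(S)`.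
Indeed, if `re f (S x) ≤ M` on the spatial numerical range, then `‖x - t S x‖ ≥ (1 - t M) ‖x‖`,
hence `1 + t re Λ(S) ≤ ‖1 + t S‖ ≤ (1 + t² ‖S‖²) / (1 - t M)`, and `t → 0⁺` gives
`re Λ(S) ≤ M`; rotating `S` by a unimodular scalar turns this into the bound on `‖Λ S‖`.
States of `L(V)` at points of `V` pull back to states of `L(W)` along any unital linear
isometry `Ψ : L(W) → L(V)`, so `v(Ψ S) ≤ v(S)` and therefore `n(V) ≤ n(W)`.

For `V = L_{w*}(X*, Y)` there are two such isometries, `R ↦ (T ↦ R ∘ T)` from `L(Y)` and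
`S ↦ (T ↦ T ∘ S*)` from `L(X)`: they preserve weak*-to-weak continuity, and evaluating them
on rank-one operators `f ↦ f(x) y` shows that they do not decrease norms. -/

open RCLike ContinuousLinearMap NormedSpace Filter Topology

section NumericalRange

variable {𝕜 W : Type*} [RCLike 𝕜] [NormedAddCommGroup W] [NormedSpace 𝕜 W]

lemma numRadius_nonneg (T : W →L[𝕜] W) : 0 ≤ numRadius 𝕜 T :=
  Real.sSup_nonneg fun _ ⟨_, _, _, _, _, hr⟩ => hr ▸ norm_nonneg _

def spatialNumRange (T : W →L[𝕜] W) : Set 𝕜 :=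
  {z | ∃ (x : W) (f : StrongDual 𝕜 W), ‖x‖ = 1 ∧ ‖f‖ = 1 ∧ f x = 1 ∧ z = f (T x)}

lemma norm_le_numRadius_of_mem_spatialNumRange {T : W →L[𝕜] W} {z : 𝕜}
    (hz : z ∈ spatialNumRange T) : ‖z‖ ≤ numRadius 𝕜 T := by
  obtain ⟨x, f, hx, hf, hfx, rfl⟩ := hz
  refine le_csSup ⟨‖T‖, ?_⟩ ⟨x, f, hx, hf, hfx, rfl⟩
  rintro _ ⟨x, f, hx, hf, -, rfl⟩
  simpa [hx, hf] using f.le_opNorm_of_le (T.le_opNorm_of_le hx.le)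

lemma numIndex_nonneg : 0 ≤ numIndex 𝕜 W :=
  Real.sInf_nonneg fun _ ⟨T, _, hr⟩ => hr ▸ numRadius_nonneg T

lemma numIndex_of_subsingleton [Subsingleton W] : numIndex 𝕜 W = 0 := by
  have hempty : {r : ℝ | ∃ T : W →L[𝕜] W, ‖T‖ = 1 ∧ r = numRadius 𝕜 T} = ∅ :=
    Set.eq_empty_of_forall_notMem fun _ ⟨T, hT, _⟩ => by simp [Subsingleton.elim T 0] at hT
  rw [numIndex, hempty, Real.sInf_empty]

variable {A : W →L[𝕜] W} {M : ℝ}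

lemma mul_norm_le_norm_sub_apply (hM : ∀ z ∈ spatialNumRange A, re z ≤ M) (x : W) :
    (1 - M) * ‖x‖ ≤ ‖x - A x‖ := by
  rcases eq_or_ne x 0 with rfl | hx
  · simp
  have hx' : ‖x‖ ≠ 0 := norm_ne_zero_iff.2 hx
  obtain ⟨f, hf, hfx⟩ := exists_dual_vector 𝕜 x hx'
  have hfu : f ((‖x‖⁻¹ : 𝕜) • x) = 1 := by
    rw [map_smul, hfx, smul_eq_mul, inv_mul_cancel₀ (ofReal_ne_zero.2 hx')]
  have hAx : re (f (A x)) ≤ M * ‖x‖ := by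
    have := hM _ ⟨_, f, norm_smul_inv_norm hx, hf, hfu, rfl⟩
    rw [map_smul, map_smul, smul_eq_mul, ← ofReal_inv, re_ofReal_mul] at this
    rwa [inv_mul_le_iff₀ (by positivity), mul_comm] at this
  calc (1 - M) * ‖x‖ ≤ re (f x) - re (f (A x)) := by rw [hfx, ofReal_re]; linarith
    _ = re (f (x - A x)) := by rw [map_sub, map_sub]
    _ ≤ ‖f (x - A x)‖ := re_le_norm _
    _ ≤ ‖x - A x‖ := by simpa [hf] using f.le_opNorm (x - A x)

lemma norm_one_add_le (hM : ∀ z ∈ spatialNumRange A, re z ≤ M) (hM1 : M < 1) :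
    ‖1 + A‖ ≤ (1 + ‖A‖ ^ 2) / (1 - M) := by
  refine opNorm_le_bound _ (by positivity) fun x => ?_
  rw [div_mul_eq_mul_div, le_div_iff₀ (by linarith), mul_comm]
  calc (1 - M) * ‖(1 + A) x‖ ≤ ‖(1 + A) x - A ((1 + A) x)‖ := mul_norm_le_norm_sub_apply hM _
    _ = ‖x - A (A x)‖ := by congr 1; simp only [add_apply, one_apply_eq_self, map_add]; abel
    _ ≤ ‖x‖ + ‖A‖ * (‖A‖ * ‖x‖) :=
        (norm_sub_le _ _).trans (by gcongr; exact A.le_opNorm_of_le (A.le_opNorm x))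
    _ = (1 + ‖A‖ ^ 2) * ‖x‖ := by ring

def IsState (Λ : StrongDual 𝕜 (W →L[𝕜] W)) : Prop :=
  ‖Λ‖ ≤ 1 ∧ Λ 1 = 1

lemma IsState.re_apply_le {Λ : StrongDual 𝕜 (W →L[𝕜] W)} (hΛ : IsState Λ)
    (hM : ∀ z ∈ spatialNumRange A, re z ≤ M) : re (Λ A) ≤ M := by
  have bound (t : ℝ) (ht : 0 < t) (htM : t * M < 1) :
      re (Λ A) ≤ (M + t * ‖A‖ ^ 2) / (1 - t * M) := by
    have htA : ∀ z ∈ spatialNumRange ((t : 𝕜) • A), re z ≤ t * M := by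
      rintro _ ⟨x, f, hx, hf, hfx, rfl⟩
      rw [smul_apply, map_smul, smul_eq_mul, re_ofReal_mul]
      exact mul_le_mul_of_nonneg_left (hM _ ⟨x, f, hx, hf, hfx, rfl⟩) ht.le
    have key : 1 + t * re (Λ A) ≤ (1 + t ^ 2 * ‖A‖ ^ 2) / (1 - t * M) :=
      calc 1 + t * re (Λ A) = re (Λ (1 + (t : 𝕜) • A)) := by
            rw [map_add, map_smul, hΛ.2, smul_eq_mul, map_add, re_ofReal_mul, one_re]
        _ ≤ ‖Λ (1 + (t : 𝕜) • A)‖ := re_le_norm _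
        _ ≤ ‖1 + (t : 𝕜) • A‖ :=
            (Λ.le_opNorm _).trans (mul_le_of_le_one_left (norm_nonneg _) hΛ.1)
        _ ≤ (1 + ‖(t : 𝕜) • A‖ ^ 2) / (1 - t * M) := norm_one_add_le htA htM
        _ = (1 + t ^ 2 * ‖A‖ ^ 2) / (1 - t * M) := by
            rw [norm_smul, norm_ofReal, abs_of_pos ht, mul_pow]
    rw [le_div_iff₀ (by linarith)] at key ⊢
    nlinarith
  have hlim : Tendsto (fun t : ℝ => (M + t * ‖A‖ ^ 2) / (1 - t * M)) (𝓝[>] 0) (𝓝 M) := by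
    have : ContinuousAt (fun t : ℝ => (M + t * ‖A‖ ^ 2) / (1 - t * M)) 0 :=
      ContinuousAt.div (by fun_prop) (by fun_prop) (by simp)
    simpa using this.tendsto.mono_left nhdsWithin_le_nhds
  have hsmall : ∀ᶠ t in 𝓝[>] (0 : ℝ), 0 < t ∧ t * M < 1 :=
    eventually_mem_nhdsWithin.and <| nhdsWithin_le_nhds <|
      ContinuousAt.eventually_lt (by fun_prop) continuousAt_const (by simp)
  exact ge_of_tendsto hlim (hsmall.mono fun t ht => bound t ht.1 ht.2)

lemma IsState.norm_apply_le_numRadius {Λ : StrongDual 𝕜 (W →L[𝕜] W)} (hΛ : IsState Λ)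
    (S : W →L[𝕜] W) : ‖Λ S‖ ≤ numRadius 𝕜 S := by
  rcases eq_or_ne (Λ S) 0 with h | h
  · simpa [h] using numRadius_nonneg S
  set c : 𝕜 := ‖Λ S‖ / Λ S
  have hc : ‖c‖ = 1 := by simp [c, norm_div, h]
  have key := hΛ.re_apply_le (A := c • S) <| by
    rintro _ ⟨x, f, hx, hf, hfx, rfl⟩
    calc re (f ((c • S) x)) ≤ ‖f ((c • S) x)‖ := re_le_norm _
      _ = ‖f (S x)‖ := by simp [hc]
      _ ≤ numRadius 𝕜 S := norm_le_numRadius_of_mem_spatialNumRange ⟨x, f, hx, hf, hfx, rfl⟩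
  rwa [map_smul, smul_eq_mul, div_mul_cancel₀ _ h, ofReal_re] at key

end NumericalRange

section Transfer

variable {𝕜 V W : Type*} [RCLike 𝕜] [NormedAddCommGroup V] [NormedSpace 𝕜 V]
  [NormedAddCommGroup W] [NormedSpace 𝕜 W]

lemma numRadius_le_of_unital_contraction (Ψ : (W →L[𝕜] W) →ₗ[𝕜] (V →L[𝕜] V))
    (hΨ : ∀ R, ‖Ψ R‖ ≤ ‖R‖) (hΨ1 : Ψ 1 = 1) (S : W →L[𝕜] W) :
    numRadius 𝕜 (Ψ S) ≤ numRadius 𝕜 S := by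
  refine Real.sSup_le ?_ (numRadius_nonneg S)
  rintro _ ⟨v, φ, hv, hφ, hφv, rfl⟩
  let Λ : StrongDual 𝕜 (W →L[𝕜] W) :=
    (φ ∘L apply 𝕜 V v).toLinearMap.comp Ψ |>.mkContinuous 1 fun R =>
      calc ‖φ (Ψ R v)‖ ≤ ‖Ψ R‖ := by simpa [hφ, hv] using φ.le_opNorm_of_le ((Ψ R).le_opNorm v)
        _ ≤ 1 * ‖R‖ := by rw [one_mul]; exact hΨ R
  have hΛ : IsState Λ :=
    ⟨LinearMap.mkContinuous_norm_le _ zero_le_one _, by simp [Λ, hΨ1, hφv]⟩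
  exact hΛ.norm_apply_le_numRadius S

lemma numIndex_le_of_unital_isometry (Ψ : (W →L[𝕜] W) →ₗᵢ[𝕜] (V →L[𝕜] V)) (hΨ1 : Ψ 1 = 1) :
    numIndex 𝕜 V ≤ numIndex 𝕜 W := by
  rcases subsingleton_or_nontrivial W with hW | hW
  · have h10 : (1 : V →L[𝕜] V) = 0 := by
      rw [← hΨ1, Subsingleton.elim (1 : W →L[𝕜] W) 0, map_zero]
    have : Subsingleton V := ⟨fun a b => sub_eq_zero.1 (by simpa using congr($h10 (a - b)))⟩
    exact numIndex_of_subsingleton.trans_le numIndex_nonneg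
  refine le_csInf ⟨_, 1, norm_id, rfl⟩ ?_
  rintro _ ⟨S, hS, rfl⟩
  calc numIndex 𝕜 V ≤ numRadius 𝕜 (Ψ S) :=
        csInf_le ⟨0, fun _ ⟨T, _, hr⟩ => hr ▸ numRadius_nonneg T⟩ ⟨_, (Ψ.norm_map S).trans hS, rfl⟩
    _ ≤ numRadius 𝕜 S :=
        numRadius_le_of_unital_contraction Ψ.toLinearMap (fun R => (Ψ.norm_map R).le) hΨ1 S

end Transfer

section Action

def restrictEnd {𝕜 E F : Type*} [NontriviallyNormedField 𝕜] [NormedAddCommGroup E]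
    [NormedSpace 𝕜 E] [AddCommMonoid F] [Module 𝕜 F] (B : F →ₗ[𝕜] E →L[𝕜] E)
    (Z : Submodule 𝕜 E) (hB : ∀ f, ∀ z ∈ Z, B f z ∈ Z) : F →ₗ[𝕜] Z →L[𝕜] Z where
  toFun f := ((B f).comp Z.subtypeL).codRestrict Z fun z => hB f z z.2
  map_add' f g := by ext z; exact congr($(map_add B f g) z)
  map_smul' c f := by ext z; exact congr($(map_smul B c f) z)

variable {𝕜 E W : Type*} [RCLike 𝕜] [NormedAddCommGroup E] [NormedSpace 𝕜 E]
  [NormedAddCommGroup W] [NormedSpace 𝕜 W]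

/-- `ι` embeds `W` into `Z` so that the restriction of the action `B` to `Z` is isometric. -/
lemma numIndex_le_of_action (B : (W →L[𝕜] W) →ₗ[𝕜] E →L[𝕜] E) (Z : Submodule 𝕜 E)
    (hB : ∀ R, ∀ z ∈ Z, B R z ∈ Z) (hB_one : ∀ z ∈ Z, B 1 z = z)
    (hB_le : ∀ R, ∀ z ∈ Z, ‖B R z‖ ≤ ‖R‖ * ‖z‖) (ι : W → E) (hι_mem : ∀ w, ι w ∈ Z)
    (hι : ∀ w, ‖ι w‖ ≤ ‖w‖) (hBι : ∀ R w, ‖R w‖ ≤ ‖B R (ι w)‖) :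
    numIndex 𝕜 Z ≤ numIndex 𝕜 W := by
  let Ψ := restrictEnd B Z hB
  have hΨ_le (R : W →L[𝕜] W) : ‖Ψ R‖ ≤ ‖R‖ :=
    opNorm_le_bound _ (norm_nonneg R) fun z => hB_le R z z.2
  have hΨ_ge (R : W →L[𝕜] W) : ‖R‖ ≤ ‖Ψ R‖ :=
    opNorm_le_bound _ (norm_nonneg _) fun w =>
      (hBι R w).trans ((Ψ R).le_opNorm_of_le (x := ⟨ι w, hι_mem w⟩) (hι w))
  exact numIndex_le_of_unital_isometry
    { toLinearMap := Ψ, norm_map' := fun R => le_antisymm (hΨ_le R) (hΨ_ge R) }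
    (by ext1 z; exact Subtype.ext (hB_one z z.2))

end Action

lemma exists_norm_eq_one (𝕜 E : Type*) [RCLike 𝕜] [NormedAddCommGroup E] [NormedSpace 𝕜 E]
    [Nontrivial E] : ∃ x : E, ‖x‖ = 1 :=
  let ⟨x, hx⟩ := exists_ne (0 : E)
  ⟨(‖x‖⁻¹ : 𝕜) • x, norm_smul_inv_norm hx⟩

section OperatorSpaces

variable {𝕜 E X Y : Type*} [RCLike 𝕜] [NormedAddCommGroup E] [NormedSpace 𝕜 E]
  [NormedAddCommGroup X] [NormedSpace 𝕜 X] [NormedAddCommGroup Y] [NormedSpace 𝕜 Y]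

lemma numIndex_le_of_comp_mem (Z : Submodule 𝕜 (E →L[𝕜] Y))
    (hZ : ∀ R : Y →L[𝕜] Y, ∀ T ∈ Z, R ∘L T ∈ Z) {e : StrongDual 𝕜 E} (he : ‖e‖ = 1)
    (he_mem : ∀ y, e.smulRight y ∈ Z) : numIndex 𝕜 Z ≤ numIndex 𝕜 Y :=
  numIndex_le_of_action (compL 𝕜 E Y Y).toLinearMap Z hZ (fun _ _ => rfl)
    (fun R T _ => R.opNorm_comp_le T) e.smulRight he_mem
    (fun y => by rw [norm_smulRight_apply, he, one_mul])
    (fun R y => by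
      change ‖R y‖ ≤ ‖R ∘L e.smulRight y‖
      rw [show R ∘L e.smulRight y = e.smulRight (R y) by ext; simp, norm_smulRight_apply, he,
        one_mul])

/-- Here `(compL 𝕜 X X 𝕜).flip S` is the adjoint `f ↦ f ∘ S` of `S`. Instance search does not
find the normed structure of a subspace of `L(X*, Y)`, so it is given explicitly. -/
lemma numIndex_le_of_comp_dual_mem (Z : Submodule 𝕜 (StrongDual 𝕜 X →L[𝕜] Y))
    (hZ : ∀ S : X →L[𝕜] X, ∀ T ∈ Z, T ∘L (compL 𝕜 X X 𝕜).flip S ∈ Z) {y₀ : Y} (hy₀ : ‖y₀‖ = 1)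
    (hy₀_mem : ∀ x, (inclusionInDoubleDual 𝕜 X x).smulRight y₀ ∈ Z) :
    @numIndex 𝕜 _ Z (Submodule.normedAddCommGroup (E := StrongDual 𝕜 X →L[𝕜] Y) Z)
      (Submodule.normedSpace (E := StrongDual 𝕜 X →L[𝕜] Y) Z) ≤ numIndex 𝕜 X := by
  have hδ (x : X) : ‖(inclusionInDoubleDual 𝕜 X x).smulRight y₀‖ = ‖x‖ := by
    rw [norm_smulRight_apply, hy₀, mul_one]
    exact (inclusionInDoubleDualLi 𝕜).norm_map x
  have hdual_le (S : X →L[𝕜] X) : ‖(compL 𝕜 X X 𝕜).flip S‖ ≤ ‖S‖ :=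
    opNorm_le_bound _ (norm_nonneg S) fun f => (f.opNorm_comp_le S).trans_eq (mul_comm _ _)
  refine numIndex_le_of_action (E := StrongDual 𝕜 X →L[𝕜] Y)
    ((compL 𝕜 (StrongDual 𝕜 X) (StrongDual 𝕜 X) Y).flip ∘L (compL 𝕜 X X 𝕜).flip).toLinearMap
    Z hZ (fun T _ => by ext; rfl) (fun S T _ => ?_) _ hy₀_mem (fun x => (hδ x).le)
    (fun S x => ?_)
  · exact (T.opNorm_comp_le _).trans
      ((mul_comm _ _).trans_le (mul_le_mul_of_nonneg_right (hdual_le S) (norm_nonneg T)))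
  · change ‖S x‖ ≤ ‖(inclusionInDoubleDual 𝕜 X x).smulRight y₀ ∘L (compL 𝕜 X X 𝕜).flip S‖
    rw [show (inclusionInDoubleDual 𝕜 X x).smulRight y₀ ∘L (compL 𝕜 X X 𝕜).flip S =
      (inclusionInDoubleDual 𝕜 X (S x)).smulRight y₀ from rfl, hδ]

end OperatorSpaces

section WeakStarWeak

variable {𝕜 X Y : Type*} [RCLike 𝕜] [NormedAddCommGroup X] [NormedSpace 𝕜 X]
  [NormedAddCommGroup Y] [NormedSpace 𝕜 Y]

def IsWeakStarWeakContinuous (T : StrongDual 𝕜 X →L[𝕜] Y) : Prop :=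
  Continuous fun f : WeakDual 𝕜 X => toWeakSpace 𝕜 Y (T (WeakDual.toStrongDual f))

lemma IsWeakStarWeakContinuous.comp_left {T : StrongDual 𝕜 X →L[𝕜] Y}
    (hT : IsWeakStarWeakContinuous T) (R : Y →L[𝕜] Y) : IsWeakStarWeakContinuous (R ∘L T) :=
  (WeakSpace.map R).continuous.comp hT

lemma IsWeakStarWeakContinuous.comp_dual {T : StrongDual 𝕜 X →L[𝕜] Y}
    (hT : IsWeakStarWeakContinuous T) (S : X →L[𝕜] X) :
    IsWeakStarWeakContinuous (T ∘L (compL 𝕜 X X 𝕜).flip S) :=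
  hT.comp (WeakDual.continuous_of_continuous_eval fun x => WeakDual.eval_continuous (S x))

lemma isWeakStarWeakContinuous_smulRight (x : X) (y : Y) :
    IsWeakStarWeakContinuous ((inclusionInDoubleDual 𝕜 X x).smulRight y) :=
  (toWeakSpaceCLM 𝕜 Y).continuous.comp ((WeakDual.eval_continuous x).smul continuous_const)

end WeakStarWeak

theorem numIndex_weakStarContinuousOperators_le_min_general {𝕜 X Y : Type*} [RCLike 𝕜]
    [NormedAddCommGroup X] [NormedSpace 𝕜 X]
    [NormedAddCommGroup Y] [NormedSpace 𝕜 Y]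
    (Z : Submodule 𝕜 (StrongDual 𝕜 X →L[𝕜] Y))
    (hZ : ∀ T : StrongDual 𝕜 X →L[𝕜] Y, T ∈ Z ↔
      Continuous (fun f : WeakDual 𝕜 X => toWeakSpace 𝕜 Y (T (WeakDual.toStrongDual f)))) :
    @numIndex 𝕜 _ ↥Z (Submodule.normedAddCommGroup (E := StrongDual 𝕜 X →L[𝕜] Y) Z)
      (Submodule.normedSpace (E := StrongDual 𝕜 X →L[𝕜] Y) Z) ≤ min (numIndex 𝕜 X) (numIndex 𝕜 Y) := by
  have hZ_post (R : Y →L[𝕜] Y) (T) (hT : T ∈ Z) : R ∘L T ∈ Z :=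
    (hZ _).2 (IsWeakStarWeakContinuous.comp_left ((hZ T).1 hT) R)
  have hZ_dual (S : X →L[𝕜] X) (T) (hT : T ∈ Z) : T ∘L (compL 𝕜 X X 𝕜).flip S ∈ Z :=
    (hZ _).2 (IsWeakStarWeakContinuous.comp_dual ((hZ T).1 hT) S)
  have hZ_rankOne (x : X) (y : Y) : (inclusionInDoubleDual 𝕜 X x).smulRight y ∈ Z :=
    (hZ _).2 (isWeakStarWeakContinuous_smulRight x y)
  let _ : NormedAddCommGroup Z := Submodule.normedAddCommGroup (E := StrongDual 𝕜 X →L[𝕜] Y) Z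
  let _ : NormedSpace 𝕜 Z := Submodule.normedSpace (E := StrongDual 𝕜 X →L[𝕜] Y) Z
  rcases subsingleton_or_nontrivial X with hX | hX
  · rw [numIndex_of_subsingleton]
    exact le_min numIndex_nonneg numIndex_nonneg
  rcases subsingleton_or_nontrivial Y with hY | hY
  · rw [numIndex_of_subsingleton]
    exact le_min numIndex_nonneg numIndex_nonneg
  obtain ⟨x₀, hx₀⟩ := exists_norm_eq_one 𝕜 X
  obtain ⟨y₀, hy₀⟩ := exists_norm_eq_one 𝕜 Y
  refine le_min (numIndex_le_of_comp_dual_mem Z hZ_dual hy₀ (hZ_rankOne · y₀)) ?_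
  exact numIndex_le_of_comp_mem (E := StrongDual 𝕜 X) Z hZ_post
    (((inclusionInDoubleDualLi 𝕜).norm_map x₀).trans hx₀) (hZ_rankOne x₀)

/-- `n(L_{w*}(X*,Y)) ≤ min{n(X), n(Y)}`, where `L_{w*}(X*,Y)` is the space of
bounded operators from `X*` to `Y` which are weak*-to-weak continuous, with the operator
norm. -/
theorem numIndex_weakStarContinuousOperators_le_min {𝕜 X Y : Type*} [RCLike 𝕜]
    [NormedAddCommGroup X] [NormedSpace 𝕜 X] [CompleteSpace X]
    [NormedAddCommGroup Y] [NormedSpace 𝕜 Y] [CompleteSpace Y]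
    (Z : Submodule 𝕜 (StrongDual 𝕜 X →L[𝕜] Y))
    (hZ : ∀ T : StrongDual 𝕜 X →L[𝕜] Y, T ∈ Z ↔
      Continuous (fun f : WeakDual 𝕜 X => toWeakSpace 𝕜 Y (T (WeakDual.toStrongDual f)))) :
    @numIndex 𝕜 _ ↥Z (Submodule.normedAddCommGroup (E := StrongDual 𝕜 X →L[𝕜] Y) Z)
      (Submodule.normedSpace (E := StrongDual 𝕜 X →L[𝕜] Y) Z) ≤ min (numIndex 𝕜 X) (numIndex 𝕜 Y) :=
  numIndex_weakStarContinuousOperators_le_min_general Z hZ
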